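/- Let G be a progressive graph and ≺ a linear order on E(G) satisfying conditions (U1) and (U2). Then ≺ satisfies condition (P̃2) if and only if ≺ satisfies condition (P3). -/

import Mathlib

variable {V E : Type}

/-- Edge reachability `e1 → e2`: a directed path of edges `f_0, …, f_k` with `k ≥ 1`,
`f_0 = e1`, `f_k = e2` and `t f_{i-1} = s f_i`. -/
def eReach (s t : E → V) : E → E → Prop :=
  Relation.TransGen (fun a b => t a = s b)

/-- Vertex reachability `v → w`: a directed path from `v` to `w` using at least one edge. -/
def vReach (s t : E → V) : V → V → Prop :=
  Relation.TransGen (fun v w => ∃ e, s e = v ∧ t e = w)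

/-- A directed graph is acyclic if no vertex reaches itself. -/
def Acyclic (s t : E → V) : Prop := ∀ v, ¬ vReach s t v v

/-- `I(v)`: incoming edges of `v`. -/
def inE (t : E → V) (v : V) : Set E := {e | t e = v}

/-- `O(v)`: outgoing edges of `v`. -/
def outE (s : E → V) (v : V) : Set E := {e | s e = v}

/-- Convex hull `X̄` of `X` in the linear order `le`: the interval `{y | X^- ≤ y ≤ X^+}`
(empty when `X` is empty). -/
def hull (le : E → E → Prop) (X : Set E) : Set E :=
  {y | ∃ a ∈ X, ∃ b ∈ X, le a y ∧ le y b}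

/-- The strict order associated to a linear order `le`. -/
def ltOf (le : E → E → Prop) (a b : E) : Prop := le a b ∧ a ≠ b

/-- A source: no incoming edges. -/
def IsSource (t : E → V) (v : V) : Prop := inE t v = ∅

/-- A sink: no outgoing edges. -/
def IsSink (s : E → V) (v : V) : Prop := outE s v = ∅

/-- A progressive graph: acyclic and every source and every sink has degree 1. -/
def Progressive (s t : E → V) : Prop :=
  Acyclic s t ∧
  ∀ v, (IsSource t v ∨ IsSink s v) → ({e | s e = v ∨ t e = v} : Set E).ncard = 1

/-- `I(G)`: input edges, those whose source vertex is a source of `G`. -/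
def inputE (s t : E → V) : Set E := {e | IsSource t (s e)}

/-- `O(G)`: output edges, those whose target vertex is a sink of `G`. -/
def outputE (s t : E → V) : Set E := {e | IsSink s (t e)}

/-- Condition (U1) = (P1): `e1 → e2` implies `e1 ≺ e2`. -/
def U1 (s t : E → V) (le : E → E → Prop) : Prop :=
  ∀ e1 e2, eReach s t e1 e2 → ltOf le e1 e2

/-- Condition (U2): for every vertex `v`, `Ī(v) ∩ Ō(v) = ∅` and `Ē(v) = Ī(v) ∪ Ō(v)`. -/
def U2 (s t : E → V) (le : E → E → Prop) : Prop :=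
  ∀ v, hull le (inE t v) ∩ hull le (outE s v) = ∅ ∧
    hull le (inE t v ∪ outE s v) = hull le (inE t v) ∪ hull le (outE s v)

/-- Condition (U3). -/
def U3 (s t : E → V) (le : E → E → Prop) : Prop :=
  ∀ v1 v2,
    ((inE t v1 ∩ hull le (inE t v2)).Nonempty →
      hull le (inE t v1) ⊆ hull le (inE t v2)) ∧
    ((outE s v1 ∩ hull le (outE s v2)).Nonempty →
      hull le (outE s v1) ⊆ hull le (outE s v2))

/-- Condition (U4): for every progressive vertex `v`, `I(G) ∩ Ō(v) = ∅` and `O(G) ∩ Ī(v) = ∅`. -/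
def U4 (s t : E → V) (le : E → E → Prop) : Prop :=
  ∀ v, ¬ IsSource t v → ¬ IsSink s v →
    inputE s t ∩ hull le (outE s v) = ∅ ∧ outputE s t ∩ hull le (inE t v) = ∅

/-- An upward planar order: a linear order on the edges satisfying (U1), (U2), (U3). -/
def IsUPO (s t : E → V) (le : E → E → Prop) : Prop :=
  IsLinearOrder E le ∧ U1 s t le ∧ U2 s t le ∧ U3 s t le

/-- Condition (P2). -/
def P2 (s t : E → V) (le : E → E → Prop) : Prop :=
  ∀ e1 e2 e3, ltOf le e1 e2 → ltOf le e2 e3 → eReach s t e1 e3 →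
    eReach s t e1 e2 ∨ eReach s t e2 e3

/-- Condition (P̃2). -/
def P2t (s t : E → V) (le : E → E → Prop) : Prop :=
  ∀ e1 e2 e3, ltOf le e1 e2 → ltOf le e2 e3 → t e1 = s e3 →
    eReach s t e1 e2 ∨ eReach s t e2 e3

/-- Condition (P3) (for distinct vertices). -/
def P3 (s t : E → V) (le : E → E → Prop) : Prop :=
  ∀ v1 v2, v1 ≠ v2 →
    ((inE t v1 ∩ hull le (inE t v2)).Nonempty → vReach s t v1 v2) ∧
    ((outE s v1 ∩ hull le (outE s v2)).Nonempty → vReach s t v2 v1)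

/-- Condition (A): for distinct `v1 v2`, `∅ ≠ Ī(v1) ⊆ Ī(v2)` implies `v1 → v2`,
and `∅ ≠ Ō(v1) ⊆ Ō(v2)` implies `v2 → v1`. -/
def CondA (s t : E → V) (le : E → E → Prop) : Prop :=
  ∀ v1 v2, v1 ≠ v2 →
    ((hull le (inE t v1)).Nonempty → hull le (inE t v1) ⊆ hull le (inE t v2) →
      vReach s t v1 v2) ∧
    ((hull le (outE s v1)).Nonempty → hull le (outE s v1) ⊆ hull le (outE s v2) →
      vReach s t v2 v1)

/-- A POP-graph: a progressive graph with a planar order ((P1) and (P2)). -/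
def IsPOP (s t : E → V) (le : E → E → Prop) : Prop :=
  Progressive s t ∧ IsLinearOrder E le ∧ U1 s t le ∧ P2 s t le

/-- `U(v) = {w | Ō(v) ⊊ Ō(w)}` when `O(v) ≠ ∅`, and `U(v) = ∅` otherwise. -/
def Uset (s : E → V) (le : E → E → Prop) (v : V) : Set V :=
  {w | (outE s v).Nonempty ∧ hull le (outE s v) ⊂ hull le (outE s w)}

/-- `D(v) = {w | Ī(v) ⊊ Ī(w)}` when `I(v) ≠ ∅`, and `D(v) = ∅` otherwise. -/
def Dset (t : E → V) (le : E → E → Prop) (v : V) : Set V :=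
  {w | (inE t v).Nonempty ∧ hull le (inE t v) ⊂ hull le (inE t w)}

/-- A CPP-extension of `G = (s, t)`: a POP-graph `(s', t', le')` with an embedding
`(φ0, φ1)` satisfying (E1)–(E4). -/
def IsCPP {V' E' : Type} (s t : E → V) (s' t' : E' → V')
    (le' : E' → E' → Prop) (φ0 : V → V') (φ1 : E → E') : Prop :=
  Function.Injective φ0 ∧ Function.Injective φ1 ∧
  (∀ e, s' (φ1 e) = φ0 (s e)) ∧ (∀ e, t' (φ1 e) = φ0 (t e)) ∧
  IsPOP s' t' le' ∧
  -- (E1)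
  Set.range φ0 = {v : V' | ¬ IsSource t' v ∧ ¬ IsSink s' v} ∧
  -- (E2)
  Nat.card E' = Nat.card E + ({v : V | IsSource t v}).ncard + ({v : V | IsSink s v}).ncard ∧
  -- (E3)
  (∀ v w, IsSource t v → IsSink s w → inE t' (φ0 v) ∩ outE s' (φ0 w) = ∅) ∧
  -- (E4)
  (∀ e' : E', e' ∉ Set.range φ1 → e' ∉ inputE s' t' → e' ∉ outputE s' t' →
    ((∃ a ∈ outE s' (s' e'), ltOf le' a e') ∧ (∃ b ∈ outE s' (s' e'), ltOf le' e' b)) ∨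
    ((∃ a ∈ inE t' (t' e'), ltOf le' a e') ∧ (∃ b ∈ inE t' (t' e'), ltOf le' e' b)))

/-!
(P3) ⇒ (P̃2): for `v = t e₁ = s e₃`, (U2) puts `e₂` into `Ī(v)` or `Ō(v)`, and (P3) applied to
`t e₂, v` resp. `v, s e₂` gives the path `e₂ → e₃` resp. `e₁ → e₂`.

(P̃2) ⇒ (P3): let `e ∈ I(v₁)` lie strictly between `a, b ∈ I(v₂)`. Since `v₂` has two incoming
edges it is not a sink, so there is `f ∈ O(v₂)`, and `a ≺ e ≺ f` with `t a = s f`. A path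
`a → e` would begin with an edge of `O(v₂)`, which by (U1) comes after `b ≻ e`; hence `e → f`,
that is `v₁ → v₂`. The claim for outgoing edges is this one for the reversed graph with the
reversed order.
-/

open Function Relation

section

variable {V E : Type} {s t : E → V} {le : E → E → Prop}

theorem eReach_swap {a b : E} : eReach t s a b ↔ eReach s t b a := by
  have : (fun a b : E => s a = t b) = swap fun a b => t a = s b := by
    funext a b; exact propext eq_comm
  rw [eReach, eReach, this, transGen_swap]

theorem vReach_swap {v w : V} : vReach t s v w ↔ vReach s t w v := by
  have : (fun v w : V => ∃ e, t e = v ∧ s e = w) = swap fun v w => ∃ e, s e = v ∧ t e = w := by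
    funext v w; exact propext (exists_congr fun _ => and_comm)
  rw [vReach, vReach, this, transGen_swap]

theorem hull_swap (X : Set E) : hull (swap le) X = hull le X := by
  ext y
  exact ⟨fun ⟨a, ha, b, hb, hay, hyb⟩ => ⟨b, hb, a, ha, hyb, hay⟩,
    fun ⟨a, ha, b, hb, hay, hyb⟩ => ⟨b, hb, a, ha, hyb, hay⟩⟩

theorem Progressive.swap (h : Progressive s t) : Progressive t s := by
  refine ⟨fun v hv => h.1 v (vReach_swap.1 hv), fun v hv => ?_⟩
  simpa only [or_comm] using h.2 v hv.symm

theorem U1.swap (h : U1 s t le) : U1 t s (swap le) := fun _ _ hr =>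
  have h' := h _ _ (eReach_swap.1 hr)
  ⟨h'.1, h'.2.symm⟩

theorem P2t.swap (h : P2t s t le) : P2t t s (swap le) := fun e₁ e₂ e₃ h₁₂ h₂₃ h₁₃ =>
  (h e₃ e₂ e₁ ⟨h₂₃.1, h₂₃.2.symm⟩ ⟨h₁₂.1, h₁₂.2.symm⟩ h₁₃.symm).symm.imp
    eReach_swap.2 eReach_swap.2

theorem eReach_iff_eq_or_vReach {e f : E} :
    eReach s t e f ↔ t e = s f ∨ vReach s t (t e) (s f) := by
  constructor
  · intro h
    induction h using TransGen.head_induction_on with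
    | single h => exact .inl h
    | @head a c hac _ ih =>
      have hstep : vReach s t (t a) (t c) := .single ⟨c, hac.symm, rfl⟩
      exact .inr (ih.elim (· ▸ hstep) hstep.trans)
  · rintro (h | h)
    · exact .single h
    · suffices ∀ {v w}, vReach s t v w → ∀ e f, t e = v → s f = w → eReach s t e f from
        this h e f rfl rfl
      intro v w hvw
      induction hvw using TransGen.head_induction_on with
      | single hvw =>
        rintro e f rfl rfl
        obtain ⟨g, hg₁, hg₂⟩ := hvw
        exact .head hg₁.symm (.single hg₂)
      | head hvu _ ih =>
        rintro e f rfl rfl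
        obtain ⟨g, hg₁, hg₂⟩ := hvu
        exact .head hg₁.symm (ih g f hg₂ rfl)

theorem Progressive.subsingleton_inE_of_isSink (h : Progressive s t) {v : V}
    (hv : IsSink s v) : (inE t v).Subsingleton := by
  obtain ⟨x, hx⟩ := Set.ncard_eq_one.1 (h.2 v (Or.inr hv))
  refine Set.subsingleton_singleton.anti (?_ : inE t v ⊆ {x})
  rw [← hx]
  exact fun e he => Or.inr he

theorem exists_mem_outE_le_of_eReach [Std.Refl le] (hU1 : U1 s t le) {a e : E}
    (h : eReach s t a e) : ∃ c ∈ outE s (t a), le c e := by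
  obtain ⟨c, hc, hce⟩ := TransGen.head'_iff.1 h
  refine ⟨c, hc.symm, ?_⟩
  rcases reflTransGen_iff_eq_or_transGen.1 hce with rfl | hce
  · exact refl_of le _
  · exact (hU1 c e hce).1

theorem vReach_of_inE_inter_hull_inE [IsPartialOrder E le] (hprog : Progressive s t)
    (hU1 : U1 s t le) (hP : P2t s t le) {v₁ v₂ : V} (hne : v₁ ≠ v₂)
    (h : (inE t v₁ ∩ hull le (inE t v₂)).Nonempty) : vReach s t v₁ v₂ := by
  obtain ⟨e, rfl, a, rfl, b, hb, hae, heb⟩ := h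
  have hea : e ≠ a := fun h => hne (h ▸ rfl)
  have heb' : e ≠ b := fun h => hne (h ▸ hb)
  obtain ⟨f, hf⟩ : (outE s (t a)).Nonempty := by
    refine Set.nonempty_iff_ne_empty.2 fun hsink => hea ?_
    have hab : a = b := hprog.subsingleton_inE_of_isSink hsink rfl hb
    exact antisymm (hab ▸ heb) hae
  have hbf : ltOf le b f := hU1 b f (.single (hb.trans hf.symm))
  have hef : ltOf le e f := ⟨trans_of le heb hbf.1, fun h => heb' (antisymm heb (h ▸ hbf.1))⟩
  rcases hP a e f ⟨hae, hea.symm⟩ hef hf.symm with hae' | hef'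
  · obtain ⟨c, hc, hce⟩ := exists_mem_outE_le_of_eReach hU1 hae'
    have hbc : ltOf le b c := hU1 b c (.single (hb.trans hc.symm))
    exact absurd (antisymm heb (trans_of le hbc.1 hce)) heb'
  · rcases eReach_iff_eq_or_vReach.1 hef' with h | h
    · exact absurd (h.trans hf) hne
    · rwa [hf] at h

theorem vReach_of_outE_inter_hull_outE [IsPartialOrder E le] (hprog : Progressive s t)
    (hU1 : U1 s t le) (hP : P2t s t le) {v₁ v₂ : V} (hne : v₁ ≠ v₂)
    (h : (outE s v₁ ∩ hull le (outE s v₂)).Nonempty) : vReach s t v₂ v₁ := by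
  rw [← vReach_swap]
  rw [← hull_swap] at h
  -- `inE s` and `outE s` coincide by definition, so `h` is the hypothesis for the reversed graph
  exact vReach_of_inE_inter_hull_inE hprog.swap hU1.swap hP.swap hne h

theorem p3_of_p2t [IsPartialOrder E le] (hprog : Progressive s t) (hU1 : U1 s t le)
    (hP : P2t s t le) : P3 s t le := fun _ _ hne =>
  ⟨vReach_of_inE_inter_hull_inE hprog hU1 hP hne,
    vReach_of_outE_inter_hull_outE hprog hU1 hP hne⟩

theorem P3.eReach_of_mem_hull_inE (hP : P3 s t le) {e f : E}
    (h : e ∈ hull le (inE t (s f))) : eReach s t e f := by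
  rw [eReach_iff_eq_or_vReach]
  by_cases hef : t e = s f
  · exact .inl hef
  · exact .inr ((hP _ _ hef).1 ⟨e, rfl, h⟩)

theorem P3.eReach_of_mem_hull_outE (hP : P3 s t le) {e f : E}
    (h : f ∈ hull le (outE s (t e))) : eReach s t e f := by
  rw [eReach_iff_eq_or_vReach]
  by_cases hef : t e = s f
  · exact .inl hef
  · exact .inr ((hP _ _ (Ne.symm hef)).2 ⟨f, rfl, h⟩)

theorem p2t_of_p3 (hU2 : U2 s t le) (hP : P3 s t le) : P2t s t le := by
  intro e₁ e₂ e₃ h₁₂ h₂₃ h₁₃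
  have h : e₂ ∈ hull le (inE t (t e₁) ∪ outE s (t e₁)) :=
    ⟨e₁, .inl rfl, e₃, .inr h₁₃.symm, h₁₂.1, h₂₃.1⟩
  rw [(hU2 _).2] at h
  rcases h with hin | hout
  · exact .inr (hP.eReach_of_mem_hull_inE (h₁₃ ▸ hin))
  · exact .inl (hP.eReach_of_mem_hull_outE hout)

end

theorem P2t_iff_P3_general {V E : Type}
    (s t : E → V) (le : E → E → Prop) (hlin : IsLinearOrder E le)
    (hprog : Progressive s t) (hU1 : U1 s t le) (hU2 : U2 s t le) :
    P2t s t le ↔ P3 s t le :=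
  have := hlin
  ⟨p3_of_p2t hprog hU1, p2t_of_p3 hU2⟩

/-- for a progressive graph with (U1) and (U2), (P̃2) ↔ (P3). -/
theorem P2t_iff_P3 {V E : Type} [Fintype V] [Fintype E]
    (s t : E → V) (le : E → E → Prop) (hlin : IsLinearOrder E le)
    (hprog : Progressive s t) (hU1 : U1 s t le) (hU2 : U2 s t le) :
    P2t s t le ↔ P3 s t le :=
  P2t_iff_P3_general s t le hlin hprog hU1 hU2
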